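/- Let m ≥ 1 be an integer and α, α̃ ∈ ℂ. Let f, f̃ : ℝ × ℤ → ℂ be differentiable in the time variable and satisfy ∂_t f(t,n) = f(t,n)·(f(t,n) − α)·(∏_{s=1}^{m} f(t,n+s) − ∏_{s=1}^{m} f(t,n−s)) and ∂_t f̃(t,n) = f̃(t,n)·(f̃(t,n) − α̃)·(∏_{s=1}^{m} f̃(t,n+s) − ∏_{s=1}^{m} f̃(t,n−s)) for all t, n. Define the residual R(t,n) := (f(t,n+m) − α)·∏_{s=0}^{m−1} f(t,n+s) − (∏_{s=1}^{m} f̃(t,n+s))·(f̃(t,n) − α̃). If for some time t₀ the relation R(t₀,n) = 0 holds for all n ∈ ℤ, then ∂_t R(t₀,n) = 0 for all n ∈ ℤ. -/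

import Mathlib

/-!
Write `A n = (f_{n+m} - α) f_{n+m-1} ⋯ f_n` and `B n = f̃_{n+m} ⋯ f̃_{n+1} (f̃_n - α̃)`, so that
`R = A - B`. Along the lattice flow every factor of `A` and `B` has a logarithmic derivative that
is polynomial in the window products `W j = f_{j+m-1} ⋯ f_j`. Using the shift identity
`f_j W_{j+1} = W_j f_{j+m}` and telescoping away the `α`-terms, the logarithmic derivative of `A`
becomes `L A n`, where `L P n = ∑_{k=0}^{m} (P (n+k) - P (n+k-m))`, and that of `B` becomes
`L B n`. Hence `∂ₜ R = A · L A - B · L B`, which vanishes at any time where `A = B` on all of `ℤ`.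
-/

open Finset

section Calculus

variable {𝕜 𝔸 ι : Type*} [NontriviallyNormedField 𝕜] [NormedCommRing 𝔸] [NormedAlgebra 𝕜 𝔸]

theorem HasDerivAt.finsetProd_of_mul {u : Finset ι} {f : ι → 𝕜 → 𝔸} {g : ι → 𝔸} {x : 𝕜}
    (hf : ∀ i ∈ u, HasDerivAt (f i) (f i x * g i) x) :
    HasDerivAt (∏ i ∈ u, f i ·) ((∏ i ∈ u, f i x) * ∑ i ∈ u, g i) x := by
  classical
  convert HasDerivAt.fun_finsetProd hf using 1
  rw [mul_sum]
  refine sum_congr rfl fun i hi => ?_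
  rw [smul_eq_mul, ← mul_assoc, prod_erase_mul _ _ hi]

end Calculus

namespace ModifiedBogoyavlensky

variable {R : Type*} [CommRing R] (m : ℕ)

def windowProd (x : ℤ → R) (j : ℤ) : R := ∏ s ∈ range m, x (j + s)

/-- The lattice reads `∂ₜ x j = x j * rate m α x j`. -/
def rate (α : R) (x : ℤ → R) (j : ℤ) : R :=
  (x j - α) * (windowProd m x (j + 1) - windowProd m x (j - m))

def backlundLeft (α : R) (x : ℤ → R) (j : ℤ) : R := (x (j + m) - α) * windowProd m x j

def backlundRight (α : R) (y : ℤ → R) (j : ℤ) : R := windowProd m y (j + 1) * (y j - α)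

def windowDiff (P : ℤ → R) (n : ℤ) : R := ∑ k ∈ range (m + 1), (P (n + k) - P (n + k - m))

theorem prod_range_add_add_one (x : ℤ → R) (j : ℤ) :
    ∏ s ∈ range m, x (j + s + 1) = windowProd m x (j + 1) := by
  simp only [windowProd, add_right_comm j]

theorem prod_range_sub_sub_one (x : ℤ → R) (j : ℤ) :
    ∏ s ∈ range m, x (j - s - 1) = windowProd m x (j - m) := by
  rw [windowProd, ← prod_range_reflect]
  refine prod_congr rfl fun s hs => ?_
  have := mem_range.mp hs
  congr 1
  omega

theorem mul_windowProd_add_one (x : ℤ → R) (j : ℤ) :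
    x j * windowProd m x (j + 1) = windowProd m x j * x (j + m) := by
  have h := (prod_range_succ' (fun s : ℕ => x (j + s)) m).symm.trans
    (prod_range_succ (fun s : ℕ => x (j + s)) m)
  simp only [Nat.cast_add, Nat.cast_one, Nat.cast_zero, add_zero, ← add_assoc,
    prod_range_add_add_one] at h
  rw [mul_comm, h, windowProd]

theorem sum_range_sub_add_one (g : ℤ → R) (a : ℤ) :
    ∑ k ∈ range m, (g (a + k) - g (a + k + 1)) = g a - g (a + m) := by
  simpa [add_assoc] using sum_range_sub' (fun k : ℕ => g (a + k)) m

theorem rate_eq_backlundLeft (α : R) (x : ℤ → R) (j : ℤ) :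
    rate m α x j = backlundLeft m α x j - backlundLeft m α x (j - m)
      + α * (windowProd m x j - windowProd m x (j + 1)) := by
  simp only [rate, backlundLeft, sub_add_cancel]
  linear_combination mul_windowProd_add_one m x j

theorem rate_eq_backlundRight (α : R) (y : ℤ → R) (j : ℤ) :
    rate m α y j = backlundRight m α y j - backlundRight m α y (j - m)
      + α * (windowProd m y (j - m) - windowProd m y (j - m + 1)) := by
  have h := mul_windowProd_add_one m y (j - m)
  rw [sub_add_cancel] at h
  simp only [rate, backlundRight]
  linear_combination h

theorem windowDiff_backlundLeft (α : R) (x : ℤ → R) (n : ℤ) :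
    windowDiff m (backlundLeft m α x) n =
      x (n + m) * (windowProd m x (n + m + 1) - windowProd m x n)
        + ∑ k ∈ range m, rate m α x (n + k) := by
  have hfirst : x (n + m) * (windowProd m x (n + m + 1) - windowProd m x n) =
      backlundLeft m α x (n + m) - backlundLeft m α x n
        + α * (windowProd m x (n + m) - windowProd m x n) := by
    simp only [backlundLeft]
    linear_combination mul_windowProd_add_one m x (n + m)
  have htel := sum_range_sub_add_one m (windowProd m x) n
  rw [sum_sub_distrib] at htel
  simp only [windowDiff, sum_range_succ, add_sub_cancel_right, rate_eq_backlundLeft,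
    sum_add_distrib, sum_sub_distrib, ← mul_sum]
  linear_combination -hfirst - α * htel

theorem windowDiff_backlundRight (α : R) (y : ℤ → R) (n : ℤ) :
    windowDiff m (backlundRight m α y) n =
      y n * (windowProd m y (n + 1) - windowProd m y (n - m))
        + ∑ k ∈ range m, rate m α y (n + k + 1) := by
  have hfirst : y n * (windowProd m y (n + 1) - windowProd m y (n - m)) =
      backlundRight m α y n - backlundRight m α y (n - m)
        + α * (windowProd m y (n + 1) - windowProd m y (n - m + 1)) := by
    have h := mul_windowProd_add_one m y (n - m)
    rw [sub_add_cancel] at h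
    simp only [backlundRight]
    linear_combination h
  have htel : ∑ k ∈ range m, (windowProd m y (n + k + 1 - m) - windowProd m y (n + k + 1 - m + 1))
      = windowProd m y (n - m + 1) - windowProd m y (n + 1) := by
    have h := sum_range_sub_add_one m (windowProd m y) (n - m + 1)
    rw [show n - m + 1 + m = n + 1 by ring] at h
    rw [← h]
    refine sum_congr rfl fun k _ => ?_
    rw [show n + k + 1 - m = n - m + 1 + k by ring]
  rw [sum_sub_distrib] at htel
  simp only [windowDiff, sum_range_succ', Nat.cast_add, Nat.cast_one, Nat.cast_zero, add_zero,
    ← add_assoc, rate_eq_backlundRight, sum_add_distrib, sum_sub_distrib, ← mul_sum]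
  linear_combination -hfirst - α * htel

theorem mul_rate (α : R) (x : ℤ → R) (j : ℤ) :
    x j * rate m α x j =
      x j * (x j - α) * ((∏ s ∈ range m, x (j + s + 1)) - ∏ s ∈ range m, x (j - s - 1)) := by
  rw [prod_range_add_add_one, prod_range_sub_sub_one, rate, mul_assoc]

section Flow

variable {𝕜 𝔸 : Type*} [NontriviallyNormedField 𝕜] [NormedCommRing 𝔸] [NormedAlgebra 𝕜 𝔸]
  {α : 𝔸} {f : 𝕜 → ℤ → 𝔸} {t : 𝕜}

theorem hasDerivAt_backlundLeft (hf : ∀ j, HasDerivAt (f · j) (f t j * rate m α (f t) j) t)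
    (n : ℤ) :
    HasDerivAt (fun τ => backlundLeft m α (f τ) n)
      (backlundLeft m α (f t) n * windowDiff m (backlundLeft m α (f t)) n) t := by
  have hx : HasDerivAt (fun τ => f τ (n + m) - α) ((f t (n + m) - α) *
      (f t (n + m) * (windowProd m (f t) (n + m + 1) - windowProd m (f t) n))) t :=
    ((hf (n + m)).sub_const α).congr_deriv (by rw [rate, add_sub_cancel_right]; ring)
  have hW : HasDerivAt (fun τ => windowProd m (f τ) n)
      (windowProd m (f t) n * ∑ k ∈ range m, rate m α (f t) (n + k)) t :=
    HasDerivAt.finsetProd_of_mul fun k _ => hf (n + k)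
  exact (hx.fun_mul hW).congr_deriv (by rw [backlundLeft, windowDiff_backlundLeft]; ring)

theorem hasDerivAt_backlundRight (hf : ∀ j, HasDerivAt (f · j) (f t j * rate m α (f t) j) t)
    (n : ℤ) :
    HasDerivAt (fun τ => backlundRight m α (f τ) n)
      (backlundRight m α (f t) n * windowDiff m (backlundRight m α (f t)) n) t := by
  have hy : HasDerivAt (fun τ => f τ n - α) ((f t n - α) *
      (f t n * (windowProd m (f t) (n + 1) - windowProd m (f t) (n - m)))) t :=
    ((hf n).sub_const α).congr_deriv (by rw [rate]; ring)
  have hW : HasDerivAt (fun τ => windowProd m (f τ) (n + 1))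
      (windowProd m (f t) (n + 1) * ∑ k ∈ range m, rate m α (f t) (n + k + 1)) t :=
    HasDerivAt.finsetProd_of_mul fun k _ => by rw [add_right_comm n 1]; exact hf (n + k + 1)
  exact (hW.fun_mul hy).congr_deriv (by rw [backlundRight, windowDiff_backlundRight]; ring)

end Flow

end ModifiedBogoyavlensky

open ModifiedBogoyavlensky

theorem backlund_modified_bogoyavlensky_general
    (m : ℕ) (α α' : ℂ)
    (f f' : ℝ → ℤ → ℂ)
    (hf : ∀ (t : ℝ) (n : ℤ),
      HasDerivAt (fun τ => f τ n)
        (f t n * (f t n - α) *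
          ((∏ s ∈ Finset.range m, f t (n + s + 1)) -
            ∏ s ∈ Finset.range m, f t (n - s - 1))) t)
    (hf' : ∀ (t : ℝ) (n : ℤ),
      HasDerivAt (fun τ => f' τ n)
        (f' t n * (f' t n - α') *
          ((∏ s ∈ Finset.range m, f' t (n + s + 1)) -
            ∏ s ∈ Finset.range m, f' t (n - s - 1))) t)
    (R : ℝ → ℤ → ℂ)
    (hR : ∀ (t : ℝ) (n : ℤ),
      R t n = (f t (n + m) - α) * (∏ s ∈ Finset.range m, f t (n + s))
        - (∏ s ∈ Finset.range m, f' t (n + s + 1)) * (f' t n - α'))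
    (t₀ : ℝ) (hR0 : ∀ n : ℤ, R t₀ n = 0) :
    ∀ n : ℤ, deriv (fun t => R t n) t₀ = 0 := by
  have hR_eq : ∀ t n, R t n = backlundLeft m α (f t) n - backlundRight m α' (f' t) n :=
    fun t n => by rw [hR, backlundLeft, backlundRight, windowProd, prod_range_add_add_one]
  have hflow : ∀ j, HasDerivAt (f · j) (f t₀ j * rate m α (f t₀) j) t₀ :=
    fun j => by rw [mul_rate]; exact hf t₀ j
  have hflow' : ∀ j, HasDerivAt (f' · j) (f' t₀ j * rate m α' (f' t₀) j) t₀ :=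
    fun j => by rw [mul_rate]; exact hf' t₀ j
  have hrel : backlundLeft m α (f t₀) = backlundRight m α' (f' t₀) :=
    funext fun j => sub_eq_zero.mp ((hR_eq t₀ j).symm.trans (hR0 j))
  intro n
  have hderiv := (hasDerivAt_backlundLeft m hflow n).fun_sub (hasDerivAt_backlundRight m hflow' n)
  rw [funext (hR_eq · n), hderiv.deriv, hrel, sub_self]

/-- The equation `(f_m - α) f_{m-1} ⋯ f = f̃_m ⋯ f̃_1 (f̃ - α̃)` defines the n-part of
the Bäcklund transformation for the modified Bogoyavlensky lattice: differentiating it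
in virtue of the two lattice flows yields a relation which holds identically in virtue
of the equation itself. -/
theorem backlund_modified_bogoyavlensky
    (m : ℕ) (hm : 1 ≤ m) (α α' : ℂ)
    (f f' : ℝ → ℤ → ℂ)
    (hf : ∀ (t : ℝ) (n : ℤ),
      HasDerivAt (fun τ => f τ n)
        (f t n * (f t n - α) *
          ((∏ s ∈ Finset.range m, f t (n + s + 1)) -
            ∏ s ∈ Finset.range m, f t (n - s - 1))) t)
    (hf' : ∀ (t : ℝ) (n : ℤ),
      HasDerivAt (fun τ => f' τ n)
        (f' t n * (f' t n - α') *
          ((∏ s ∈ Finset.range m, f' t (n + s + 1)) -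
            ∏ s ∈ Finset.range m, f' t (n - s - 1))) t)
    (R : ℝ → ℤ → ℂ)
    (hR : ∀ (t : ℝ) (n : ℤ),
      R t n = (f t (n + m) - α) * (∏ s ∈ Finset.range m, f t (n + s))
        - (∏ s ∈ Finset.range m, f' t (n + s + 1)) * (f' t n - α'))
    (t₀ : ℝ) (hR0 : ∀ n : ℤ, R t₀ n = 0) :
    ∀ n : ℤ, deriv (fun t => R t n) t₀ = 0 :=
  backlund_modified_bogoyavlensky_general m α α' f f' hf hf' R hR t₀ hR0
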